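/- arXiv:1610.04601 — 7 statements merged into one kernel-verified Lean document; each statement's English description precedes it below -/
import Mathlib

section
/- Let 1 ≤ N < L be integers, let 𝐳 be a nonzero complex number, and let w_1, …, w_N be complex numbers (not necessarily distinct) satisfying w_i^N (w_i+1)^{L−N} = 𝐳^L for every i (in particular each w_i ∉ {0, −1}). Then ∑_{(y_1,…,y_N) ∈ 𝒴_N(L)} det[w_i^j (w_i+1)^{y_j − j}]_{i,j=1}^N = det[w_i^{j−1} (w_i+1)^{−N+1}]_{i,j=1}^N − (−1)^{N−1} 𝐳^{−L} det[w_i^{j} (w_i+1)^{−N}]_{i,j=1}^N. -/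
/-- The set `𝒴_N(L)` of integer vectors `(y_1, …, y_N)` with
`−L+1 ≤ y_1 < y_2 < ⋯ < y_N ≤ 0`. -/
noncomputable def initialConfigs (N L : ℕ) : Finset (Fin N → ℤ) :=
  (Fintype.piFinset fun _ => Finset.Icc (-(L : ℤ) + 1) 0).filter
    fun y => ∀ i j : Fin N, i < j → y i < y j

/-!
Write `u_i = w_i + 1`. The `j`-th column of the summand is `c_j(y_j)` with
`c_j(t) = (w_i^j u_i^(t-j))_i`, and the geometric series gives
`∑_{a < t ≤ 0} c_j(t) = e_j - c_{j-1}(a)` with `e_j = (w_i^(j-1) u_i^(1-j))_i`, while for `j = 1`,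
`a = -L` it gives `e_1 - (u_i^(-L))_i`. Summing out `y_N`, then `y_{N-1}`, …, the correction term
is each time a copy of the neighbouring column and drops out of the determinant, leaving
`det[e] - det[e with first column (u_i^(-L))_i]`. The relation `w^N u^(L-N) = 𝐳^L` rewrites
`u^(-L)` as `𝐳^(-L) w^N u^(-N)`, i.e. as `𝐳^(-L)` times the would-be column `e_{N+1}`; moving it
to the end costs `(-1)^(N-1)`. Finally both `det[e]` and `det[e_{j+1}]` become the stated
determinants, after scaling rows by powers of `u_i`, through the projective Vandermonde identity
`det[w_i^(j-1) u_i^(N-j)] = ∏_{i<k} (w_k u_i - w_i u_k) = ∏_{i<k} (w_k - w_i)`.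
-/

open Finset Function Matrix

theorem Fin.strictMono_snoc_iff {α : Type*} [Preorder α] {n : ℕ} {y : Fin (n + 1) → α}
    {t : α} :
    StrictMono (Fin.snoc y t : Fin (n + 2) → α) ↔ StrictMono y ∧ y (Fin.last n) < t := by
  rw [Fin.strictMono_iff_lt_succ, Fin.strictMono_iff_lt_succ, Fin.forall_fin_succ']
  simp [Fin.succ_castSucc, -Fin.castSucc_succ]

theorem mem_initialConfigs {N L : ℕ} {y : Fin N → ℤ} :
    y ∈ initialConfigs N L ↔ StrictMono y ∧ ∀ j, y j ∈ Ioc (-(L : ℤ)) 0 := by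
  simp only [initialConfigs, mem_filter, Fintype.mem_piFinset, mem_Icc, mem_Ioc, StrictMono]
  grind

theorem snoc_mem_initialConfigs_iff {n L : ℕ} {y : Fin (n + 1) → ℤ} {t : ℤ} :
    (Fin.snoc y t : Fin (n + 2) → ℤ) ∈ initialConfigs (n + 2) L ↔
      y ∈ initialConfigs (n + 1) L ∧ t ∈ Ioc (y (Fin.last n)) 0 := by
  simp only [mem_initialConfigs, Fin.strictMono_snoc_iff, Fin.forall_fin_succ' (n := n + 1),
    Fin.snoc_castSucc, Fin.snoc_last, mem_Ioc]
  constructor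
  · rintro ⟨⟨hy, hlt⟩, hyr, ht⟩
    exact ⟨⟨hy, hyr⟩, hlt, ht.2⟩
  · rintro ⟨⟨hy, hyr⟩, hlt, ht⟩
    exact ⟨⟨hy, hlt⟩, hyr, (hyr _).1.trans hlt, ht⟩

theorem sum_initialConfigs_one {M : Type*} [AddCommMonoid M] (L : ℕ) (F : (Fin 1 → ℤ) → M) :
    ∑ y ∈ initialConfigs 1 L, F y = ∑ t ∈ Ioc (-(L : ℤ)) 0, F (fun _ => t) := by
  refine sum_equiv (Equiv.funUnique (Fin 1) ℤ) (fun y => ?_) (fun y _ => ?_)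
  · simp [mem_initialConfigs, Subsingleton.strictMono]
  · exact congrArg F (funext fun i => congrArg y (Subsingleton.elim _ _))

theorem sum_initialConfigs_succ_succ {M : Type*} [AddCommMonoid M] (n L : ℕ)
    (F : (Fin (n + 2) → ℤ) → M) :
    ∑ y ∈ initialConfigs (n + 2) L, F y =
      ∑ y ∈ initialConfigs (n + 1) L, ∑ t ∈ Ioc (y (Fin.last n)) 0, F (Fin.snoc y t) := by
  rw [sum_sigma']
  refine sum_nbij' (fun y => ⟨Fin.init y, y (Fin.last _)⟩) (fun p => Fin.snoc p.1 p.2)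
    (fun y hy => ?_) (fun p hp => ?_) (fun y _ => Fin.snoc_init_self y) (fun p _ => ?_)
    (fun y _ => by simp)
  · rw [← Fin.snoc_init_self y, snoc_mem_initialConfigs_iff] at hy
    simpa using hy
  · exact snoc_mem_initialConfigs_iff.2 (mem_sigma.1 hp)
  · simp

namespace AlternatingMap

variable {R M N : Type*} [CommRing R] [AddCommGroup M] [Module R M] [AddCommGroup N]
  [Module R N]

theorem map_snoc {n : ℕ} (f : M [⋀^Fin (n + 1)]→ₗ[R] N) (v : Fin n → M) (x : M) :
    f (Fin.snoc v x) = ((-1 : ℤ) ^ n • f.curryLeft x) v := by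
  rw [← Fin.insertNth_last', map_insertNth, Fin.val_last, smul_apply, curryLeft_apply_apply]

theorem sum_initialConfigs_eq {L : ℕ} {c : ℕ → ℤ → M} {e : ℕ → M}
    (h0 : ∑ t ∈ Ioc (-(L : ℤ)) 0, c 0 t = e 0)
    (hsucc : ∀ j, ∀ a ∈ Ioc (-(L : ℤ)) 0, ∑ t ∈ Ioc a 0, c (j + 1) t = e (j + 1) - c j a)
    (n : ℕ) (f : M [⋀^Fin (n + 1)]→ₗ[R] N) :
    ∑ y ∈ initialConfigs (n + 1) L, f (fun j => c j (y j)) = f (fun j => e j) := by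
  induction n with
  | zero =>
    have hconst (x : M) : (fun _ : Fin 1 => x) = update (0 : Fin 1 → M) 0 x :=
      funext fun j => by rw [Subsingleton.elim j 0, update_self]
    refine (sum_initialConfigs_one L _).trans ?_
    simp only [Fin.val_eq_zero, hconst, ← map_update_sum, h0]
  | succ n ih =>
    have hsnoc (y : Fin (n + 1) → ℤ) (t : ℤ) :
        (fun j : Fin (n + 2) => c j ((Fin.snoc y t : Fin (n + 2) → ℤ) j)) =
          Fin.snoc (fun j : Fin (n + 1) => c j (y j)) (c (n + 1) t) := by
      ext j
      refine Fin.lastCases ?_ (fun i => ?_) j <;> simp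
    have hlast (y : Fin (n + 1) → ℤ) (x : M) :
        f (Fin.snoc (fun j : Fin (n + 1) => c j (y j)) x) =
          f (update (Fin.snoc (fun j : Fin (n + 1) => c j (y j)) 0) (Fin.last _) x) := by
      rw [Fin.update_snoc_last]
    calc ∑ y ∈ initialConfigs (n + 2) L, f (fun j => c j (y j))
        = ∑ y ∈ initialConfigs (n + 1) L,
            f (Fin.snoc (fun j : Fin (n + 1) => c j (y j)) (e (n + 1))) := by
          rw [sum_initialConfigs_succ_succ]
          refine sum_congr rfl fun y hy => ?_
          simp only [hsnoc, hlast, ← map_update_sum,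
            hsucc n _ ((mem_initialConfigs.1 hy).2 (Fin.last n)), map_update_sub]
          rw [← hlast, ← hlast, sub_eq_self]
          refine f.map_eq_zero_of_eq _ (i := (Fin.last n).castSucc) (j := Fin.last _) ?_
            (Fin.castSucc_lt_last _).ne
          simp
      _ = f (fun j => e j) := by
          simp only [map_snoc, ih]
          rw [← map_snoc]
          congr 1
          ext j
          refine Fin.lastCases ?_ (fun i => ?_) j <;> simp

theorem map_update_zero_eq_neg_one_pow_smul {n : ℕ} (f : M [⋀^Fin (n + 1)]→ₗ[R] N)
    (g : ℕ → M) :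
    f (update (fun j : Fin (n + 1) => g j) 0 (g (n + 1))) =
      (-1 : ℤ) ^ n • f (fun j : Fin (n + 1) => g (j + 1)) := by
  have hcons : update (fun j : Fin (n + 1) => g j) 0 (g (n + 1)) =
      vecCons (g (n + 1)) (fun j : Fin n => g (j + 1)) := by
    ext j
    cases j using Fin.cases <;> simp [Fin.succ_ne_zero]
  have hinsert : (fun j : Fin (n + 1) => g (j + 1)) =
      Fin.insertNth (Fin.last n) (g (n + 1)) (fun j : Fin n => g (j + 1)) := by
    ext j
    cases j using Fin.lastCases <;> simp
  rw [hcons, hinsert, ← f.neg_one_pow_smul_map_insertNth, Fin.val_last]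

end AlternatingMap

theorem Matrix.det_of_eq_detRowAlternating {R : Type*} [CommRing R] {n : ℕ}
    (v : Fin n → Fin n → R) : (of fun i j => v j i).det = detRowAlternating v :=
  det_transpose (of v)

theorem Matrix.det_projVandermonde_add_one {R : Type*} [CommRing R] {n : ℕ} (w : Fin n → R) :
    (projVandermonde w (fun i => w i + 1)).det = (vandermonde w).det := by
  rw [det_projVandermonde, det_vandermonde]
  exact prod_congr rfl fun i _ => prod_congr rfl fun j _ => by ring

theorem sub_one_mul_sum_Ioc_zpow {K : Type*} [DivisionRing K] {u : K} (hu : u ≠ 0) {a : ℤ}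
    (ha : a ≤ 0) : (u - 1) * ∑ t ∈ Ioc a 0, u ^ t = u - u ^ (a + 1) := by
  induction a, ha using Int.leInductionDown with
  | base => simp
  | pred a ha ih =>
    rw [← insert_Ioc_left_eq_Ioc_sub_one_of_not_isMin ha (not_isMin a),
      sum_insert left_notMem_Ioc, mul_add, ih, sub_add_cancel, zpow_add_one₀ hu, sub_mul,
      one_mul, (Commute.self_zpow₀ u a).eq]
    abel

section Field

variable {K : Type*} [Field K]

theorem sum_Ioc_zpow_mul_add_one_zpow {w : K} (hu : w + 1 ≠ 0) (j : ℕ) {a : ℤ} (ha : a ≤ 0) :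
    ∑ t ∈ Ioc a 0, w ^ ((j : ℤ) + 1) * (w + 1) ^ (t - ((j : ℤ) + 1)) =
      w ^ (j : ℤ) * (w + 1) ^ (-(j : ℤ)) - w ^ (j : ℤ) * (w + 1) ^ (a - j) := by
  have hgeom := sub_one_mul_sum_Ioc_zpow hu ha
  rw [add_sub_cancel_right] at hgeom
  calc ∑ t ∈ Ioc a 0, w ^ ((j : ℤ) + 1) * (w + 1) ^ (t - ((j : ℤ) + 1))
      = w ^ (j : ℤ) * (w + 1) ^ (-((j : ℤ) + 1)) * (w * ∑ t ∈ Ioc a 0, (w + 1) ^ t) := by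
        rw [mul_sum, mul_sum]
        refine sum_congr rfl fun t _ => ?_
        rw [sub_eq_add_neg, zpow_add₀ hu, ← Nat.cast_succ, zpow_natCast, zpow_natCast, pow_succ]
        ring
    _ = _ := by
        rw [hgeom, mul_sub, mul_assoc, mul_assoc, ← zpow_add_one₀ hu, ← zpow_add₀ hu]
        ring_nf

theorem zpow_neg_eq_of_pow_mul_pow_eq {x y z : K} {N L : ℕ} (hy : y ≠ 0) (hz : z ≠ 0)
    (hNL : N ≤ L) (h : x ^ N * y ^ (L - N) = z ^ L) :
    y ^ (-(L : ℤ)) = z ^ (-(L : ℤ)) * (x ^ (N : ℤ) * y ^ (-(N : ℤ))) := by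
  have hx : x ^ N ≠ 0 := left_ne_zero_of_mul (h ▸ pow_ne_zero L hz)
  rw [_root_.zpow_neg, _root_.zpow_neg, _root_.zpow_neg, zpow_natCast, zpow_natCast,
    zpow_natCast, zpow_natCast, ← h, ← pow_sub_mul_pow y hNL]
  field_simp

theorem det_zpow_mul_add_one_zpow_neg {n : ℕ} {w : Fin n → K} (hu : ∀ i, w i + 1 ≠ 0) :
    (of fun i j : Fin n => w i ^ (j : ℤ) * (w i + 1) ^ (-(j : ℤ))).det =
      (of fun i j : Fin n => w i ^ (j : ℤ) * (w i + 1) ^ (-(n : ℤ) + 1)).det := by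
  have hproj : (of fun i j : Fin n => w i ^ (j : ℤ) * (w i + 1) ^ (-(j : ℤ))) =
      of fun i j => (w i + 1) ^ (-(n : ℤ) + 1) * projVandermonde w (fun i => w i + 1) i j := by
    ext i j
    rw [of_apply, of_apply, projVandermonde_apply, Fin.val_rev, ← zpow_natCast (w i + 1),
      zpow_natCast, mul_left_comm, ← zpow_natCast, ← zpow_add₀ (hu i)]
    congr 2
    omega
  have hvdm : (of fun i j : Fin n => w i ^ (j : ℤ) * (w i + 1) ^ (-(n : ℤ) + 1)) =
      of fun i j => (w i + 1) ^ (-(n : ℤ) + 1) * vandermonde w i j := by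
    ext i j
    rw [of_apply, of_apply, vandermonde_apply, zpow_natCast, mul_comm]
  rw [hproj, hvdm, det_mul_column, det_mul_column, det_projVandermonde_add_one]

theorem det_zpow_succ_mul_add_one_zpow_neg {n : ℕ} {w : Fin n → K} (hu : ∀ i, w i + 1 ≠ 0) :
    (of fun i j : Fin n => w i ^ ((j : ℤ) + 1) * (w i + 1) ^ (-((j : ℤ) + 1))).det =
      (of fun i j : Fin n => w i ^ ((j : ℤ) + 1) * (w i + 1) ^ (-(n : ℤ))).det := by
  have hscale (e : Fin n → ℤ) :
      (of fun i j : Fin n => w i ^ ((j : ℤ) + 1) * (w i + 1) ^ (e j - 1)) =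
        of fun i j => w i * (w i + 1) ^ (-1 : ℤ) *
          (of fun i j : Fin n => w i ^ (j : ℤ) * (w i + 1) ^ e j) i j := by
    ext i j
    rw [of_apply, of_apply, of_apply, ← Nat.cast_succ, zpow_natCast, zpow_natCast, pow_succ,
      sub_eq_add_neg, zpow_add₀ (hu i)]
    ring
  calc (of fun i j : Fin n => w i ^ ((j : ℤ) + 1) * (w i + 1) ^ (-((j : ℤ) + 1))).det
      = (of fun i j : Fin n => w i ^ ((j : ℤ) + 1) * (w i + 1) ^ (-(j : ℤ) - 1)).det := by
        simp only [neg_add']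
    _ = (of fun i j : Fin n => w i ^ ((j : ℤ) + 1) * (w i + 1) ^ ((-(n : ℤ) + 1) - 1)).det := by
        rw [hscale (fun j => -(j : ℤ)), hscale (fun _ => -(n : ℤ) + 1), det_mul_column,
          det_mul_column, det_zpow_mul_add_one_zpow_neg hu]
    _ = _ := by simp only [add_sub_cancel_right]

theorem sum_initialConfigs_det_eq {n L : ℕ} {w : Fin (n + 1) → K} (hu : ∀ i, w i + 1 ≠ 0) :
    ∑ y ∈ initialConfigs (n + 1) L,
        (of fun i j : Fin (n + 1) =>
          w i ^ ((j : ℤ) + 1) * (w i + 1) ^ (y j - ((j : ℤ) + 1))).det =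
      detRowAlternating (fun (j : Fin (n + 1)) i => w i ^ (j : ℤ) * (w i + 1) ^ (-(j : ℤ))) -
        detRowAlternating
          (update (fun (j : Fin (n + 1)) i => w i ^ (j : ℤ) * (w i + 1) ^ (-(j : ℤ))) 0
            (fun i => (w i + 1) ^ (-(L : ℤ)))) := by
  set A : ℕ → Fin (n + 1) → K := fun j i => w i ^ (j : ℤ) * (w i + 1) ^ (-(j : ℤ))
  set B : Fin (n + 1) → K := fun i => (w i + 1) ^ (-(L : ℤ))
  set c : ℕ → ℤ → Fin (n + 1) → K :=
    fun j t i => w i ^ ((j : ℤ) + 1) * (w i + 1) ^ (t - ((j : ℤ) + 1))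
  have hcol (j : ℕ) (a : ℤ) (ha : a ≤ 0) :
      ∑ t ∈ Ioc a 0, c j t = A j - fun i => w i ^ (j : ℤ) * (w i + 1) ^ (a - j) := by
    ext i
    simp only [Finset.sum_apply, Pi.sub_apply, c, A]
    exact sum_Ioc_zpow_mul_add_one_zpow (hu i) j ha
  have h0 : ∑ t ∈ Ioc (-(L : ℤ)) 0, c 0 t = update A 0 (A 0 - B) 0 := by
    rw [hcol 0 _ (by simp), update_self]
    simp [B]
  have hsucc (j : ℕ) (a : ℤ) (ha : a ∈ Ioc (-(L : ℤ)) 0) :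
      ∑ t ∈ Ioc a 0, c (j + 1) t = update A 0 (A 0 - B) (j + 1) - c j a := by
    rw [hcol (j + 1) a (mem_Ioc.1 ha).2, update_of_ne (Nat.succ_ne_zero j)]
    simp [c]
  have hupd : (fun j : Fin (n + 1) => update A 0 (A 0 - B) j) =
      update (fun j : Fin (n + 1) => A j) 0 (A 0 - B) :=
    update_comp_eq_of_injective' A Fin.val_injective 0 _
  have hA0 : update (fun j : Fin (n + 1) => A j) 0 (A 0) = fun j : Fin (n + 1) => A j :=
    update_eq_self_iff.2 rfl
  simp only [det_of_eq_detRowAlternating]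
  rw [AlternatingMap.sum_initialConfigs_eq h0 hsucc n, hupd, AlternatingMap.map_update_sub, hA0]

end Field

theorem sum_over_initial_configs (N L : ℕ) (hN : 1 ≤ N) (hNL : N < L)
    (zz : ℂ) (hzz : zz ≠ 0) (w : Fin N → ℂ)
    (hw : ∀ i, w i ^ N * (w i + 1) ^ (L - N) = zz ^ L) :
    ∑ y ∈ initialConfigs N L,
        Matrix.det (Matrix.of fun i j : Fin N =>
          w i ^ (((j : ℕ) : ℤ) + 1) * (w i + 1) ^ (y j - (((j : ℕ) : ℤ) + 1)))
      = Matrix.det (Matrix.of fun i j : Fin N =>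
            w i ^ ((j : ℕ) : ℤ) * (w i + 1) ^ (-(N : ℤ) + 1))
        - (-1 : ℂ) ^ (N - 1) * zz ^ (-(L : ℤ)) *
          Matrix.det (Matrix.of fun i j : Fin N =>
            w i ^ (((j : ℕ) : ℤ) + 1) * (w i + 1) ^ (-(N : ℤ))) := by
  obtain ⟨n, rfl⟩ : ∃ n, N = n + 1 := ⟨N - 1, by omega⟩
  have hu (i : Fin (n + 1)) : w i + 1 ≠ 0 := fun h =>
    hzz <| pow_eq_zero_iff (n := L) (by omega) |>.1 <| by
      rw [← hw i, h, zero_pow (Nat.sub_ne_zero_of_lt hNL), mul_zero]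
  set A : ℕ → Fin (n + 1) → ℂ := fun j i => w i ^ (j : ℤ) * (w i + 1) ^ (-(j : ℤ))
  have hB : (fun i => (w i + 1) ^ (-(L : ℤ))) = zz ^ (-(L : ℤ)) • A (n + 1) :=
    funext fun i => zpow_neg_eq_of_pow_mul_pow_eq (hu i) hzz hNL.le (hw i)
  have hshift : detRowAlternating (fun j : Fin (n + 1) => A (j + 1)) =
      (of fun i j : Fin (n + 1) => w i ^ ((j : ℤ) + 1) * (w i + 1) ^ (-((j : ℤ) + 1))).det := by
    rw [← det_of_eq_detRowAlternating]
    push_cast [A]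
    rfl
  rw [sum_initialConfigs_det_eq hu, hB, AlternatingMap.map_update_smul,
    AlternatingMap.map_update_zero_eq_neg_one_pow_smul _ A, hshift,
    ← det_of_eq_detRowAlternating, det_zpow_mul_add_one_zpow_neg hu,
    det_zpow_succ_mul_add_one_zpow_neg hu, Nat.add_sub_cancel, smul_eq_mul, zsmul_eq_mul]
  push_cast
  ring
end

section
/- Let 1 ≤ N ≤ L be integers and let w_1, …, w_N be complex numbers with w_i ∉ {0, −1} for every i. Then ∑_{(y_1,…,y_N) ∈ 𝒴_N(L)} det[w_i^j (w_i+1)^{y_j − j}]_{i,j=1}^N = det[w_i^{j−1} (w_i+1)^{−N+1} − δ_1(j) (w_i+1)^{−L}]_{i,j=1}^N, where δ_1(j) = 1 if j = 1 and 0 otherwise (note that w_i^{j−1} = 1 when j = 1). -/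
open Finset

theorem Int.sum_Ioc_sub_sub_one {G : Type*} [AddCommGroup G] (g : ℤ → G) {a b : ℤ}
    (hab : a ≤ b) :
    ∑ z ∈ Ioc a b, (g z - g (z - 1)) = g b - g a := by
  induction b, hab using Int.leInduction with
  | base => simp
  | succ b hab ih =>
    rw [← insert_Ioc_right_eq_Ioc_add_one hab, sum_insert (by simp), ih, add_sub_cancel_right]
    abel

lemma Fin.strictMono_snoc {α : Type*} [Preorder α] {n : ℕ} {y : Fin n → α} {z : α} :
    StrictMono (Fin.snoc y z : Fin (n + 1) → α) ↔ StrictMono y ∧ ∀ j, y j < z := by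
  rw [← Fin.insertNth_last', Fin.strictMono_insertNth_iff]
  simp [Fin.castSucc_lt_last, Fin.castSucc_lt_last (n := n) _ |>.not_ge]

open Classical in
noncomputable def strictMonoTuplesIoc (n : ℕ) (lo hi : ℤ) : Finset (Fin n → ℤ) :=
  {y ∈ Fintype.piFinset fun _ => Ioc lo hi | StrictMono y}

lemma mem_strictMonoTuplesIoc {n : ℕ} {lo hi : ℤ} {y : Fin n → ℤ} :
    y ∈ strictMonoTuplesIoc n lo hi ↔ (∀ j, y j ∈ Ioc lo hi) ∧ StrictMono y := by
  simp [strictMonoTuplesIoc]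

lemma snoc_mem_strictMonoTuplesIoc {n : ℕ} {lo hi : ℤ} {y : Fin n → ℤ} {z : ℤ} :
    (Fin.snoc y z : Fin (n + 1) → ℤ) ∈ strictMonoTuplesIoc (n + 1) lo hi ↔
      y ∈ strictMonoTuplesIoc n lo (hi - 1) ∧ z ∈ Ioc lo hi ∧ ∀ j, y j < z := by
  simp only [mem_strictMonoTuplesIoc, Fin.forall_fin_succ', Fin.snoc_castSucc, Fin.snoc_last,
    Fin.strictMono_snoc, mem_Ioc]
  constructor
  · rintro ⟨⟨hy, hz⟩, hmono, hlt⟩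
    exact ⟨⟨fun j => ⟨(hy j).1, by linarith [hlt j, hz.2]⟩, hmono⟩, hz, hlt⟩
  · rintro ⟨⟨hy, hmono⟩, hz, hlt⟩
    exact ⟨⟨fun j => ⟨(hy j).1, by linarith [(hy j).2]⟩, hz⟩, hmono, hlt⟩

lemma sum_strictMonoTuplesIoc_succ {M : Type*} [AddCommMonoid M] {n : ℕ} (lo hi : ℤ)
    (F : (Fin (n + 1) → ℤ) → M) :
    ∑ y ∈ strictMonoTuplesIoc (n + 1) lo hi, F y =
      ∑ y ∈ strictMonoTuplesIoc n lo (hi - 1), ∑ z ∈ Ioc lo hi with ∀ j, y j < z,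
        F (Fin.snoc y z) := by
  rw [sum_sigma']
  refine sum_nbij' (fun y => ⟨Fin.init y, y (Fin.last n)⟩) (fun p => Fin.snoc p.1 p.2)
    ?_ ?_ (fun y _ => by simp) (fun p _ => by simp) (fun y _ => by simp)
  · intro y hy
    rw [← Fin.snoc_init_self y, snoc_mem_strictMonoTuplesIoc] at hy
    simpa [hy.2.1] using hy
  · rintro ⟨y, z⟩ hp
    rw [mem_sigma, mem_filter] at hp
    exact snoc_mem_strictMonoTuplesIoc.2 ⟨hp.1, hp.2⟩

lemma filter_Ioc_forall_lt {α : Type*} [LinearOrder α] [LocallyFiniteOrder α] {n : ℕ}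
    {y : Fin (n + 1) → α} (hy : Monotone y) {lo hi : α} (hlo : lo < y (Fin.last n)) :
    {z ∈ Ioc lo hi | ∀ j, y j < z} = Ioc (y (Fin.last n)) hi := by
  ext z
  simp only [mem_filter, mem_Ioc]
  refine ⟨fun h => ⟨h.2 _, h.1.2⟩, fun h => ⟨⟨hlo.trans h.1, h.2⟩, fun j => ?_⟩⟩
  exact (hy (Fin.le_last j)).trans_lt h.1

lemma Fin.comp_snoc_val {α β : Type*} (g : ℕ → α → β) {n : ℕ} (y : Fin n → α) (a : α) :
    (fun j : Fin (n + 1) => g j (Fin.snoc (α := fun _ => α) y a j)) =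
      Fin.snoc (fun j : Fin n => g j (y j)) (g n a) := by
  ext j : 1
  cases j using Fin.lastCases <;> simp

namespace AlternatingMap

variable {R V M : Type*} [Semiring R] [AddCommGroup V] [Module R V] [AddCommGroup M]
  [Module R M] {n : ℕ}

def fixLast (f : V [⋀^Fin (n + 1)]→ₗ[R] M) (x : V) : V [⋀^Fin n]→ₗ[R] M where
  toMultilinearMap := MultilinearMap.mk' (fun v => f (Fin.snoc v x))
    (by simp only [Fin.snoc_update, f.map_update_add, implies_true])
    (by simp only [Fin.snoc_update, f.map_update_smul, implies_true])
  map_eq_zero_of_eq' v i j hv hij :=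
    f.map_eq_zero_of_eq (Fin.snoc v x) (i := i.castSucc) (j := j.castSucc) (by simpa) (by simpa)

@[simp]
lemma fixLast_apply (f : V [⋀^Fin (n + 1)]→ₗ[R] M) (x : V) (v : Fin n → V) :
    f.fixLast x v = f (Fin.snoc v x) :=
  rfl

lemma map_snoc_sub (f : V [⋀^Fin (n + 1)]→ₗ[R] M) (v : Fin n → V) (x y : V) :
    f (Fin.snoc v (x - y)) = f (Fin.snoc v x) - f (Fin.snoc v y) := by
  simpa [Fin.update_snoc_last] using
    map_sub (f.toMultilinearMap.toLinearMap (Fin.snoc v 0) (Fin.last n)) x y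

variable (c : ℕ → ℤ → V) (hc : ∀ k z, c (k + 1) z = c k z - c k (z - 1))
include hc

lemma sum_snoc_Ioc (f : V [⋀^Fin (n + 1)]→ₗ[R] M) (v : Fin n → V) (k : ℕ) {a b : ℤ}
    (hab : a ≤ b) :
    ∑ z ∈ Ioc a b, f (Fin.snoc v (c (k + 1) z)) = f (Fin.snoc v (c k b - c k a)) := by
  have hsum : ∑ z ∈ Ioc a b, c (k + 1) z = c k b - c k a := by
    simp_rw [hc]
    exact Int.sum_Ioc_sub_sub_one (c k) hab
  have hlin := map_sum (f.toMultilinearMap.toLinearMap (Fin.snoc v 0) (Fin.last n))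
    (c (k + 1)) (Ioc a b)
  simp only [MultilinearMap.toLinearMap_apply, Fin.update_snoc_last, coe_multilinearMap] at hlin
  rw [← hsum, hlin]

theorem sum_strictMonoTuplesIoc_eq (f : V [⋀^Fin n]→ₗ[R] M) {lo hi : ℤ} (h : lo + n ≤ hi + 1) :
    ∑ y ∈ strictMonoTuplesIoc n lo hi, f (fun j => c (j + 1) (y j)) =
      f (fun j => c j (hi + 1 - n + j) - if (j : ℕ) = 0 then c 0 lo else 0) := by
  induction n generalizing hi with
  | zero =>
    simp only [strictMonoTuplesIoc, Fintype.piFinset_of_isEmpty, Subsingleton.strictMono,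
      filter_true, Fintype.sum_unique]
    exact congrArg f (Subsingleton.elim _ _)
  | succ n ih =>
    rw [sum_strictMonoTuplesIoc_succ]
    simp_rw [Fin.comp_snoc_val (fun k => c (k + 1))]
    rcases n with _ | n
    · have hlo : lo ≤ hi := by push_cast at h; omega
      simp only [IsEmpty.forall_iff, strictMonoTuplesIoc, Fintype.piFinset_of_isEmpty,
        Subsingleton.strictMono, filter_true, Fintype.sum_unique]
      rw [sum_snoc_Ioc c hc f _ 0 hlo]
      congr 1
      ext j : 1
      fin_cases j
      simp [Fin.snoc]
    · calc _ = ∑ y ∈ strictMonoTuplesIoc (n + 1) lo (hi - 1),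
              f.fixLast (c (n + 1) hi) (fun j => c (j + 1) (y j)) := by
            refine sum_congr rfl fun y hy => ?_
            obtain ⟨hbounds, hmono⟩ := mem_strictMonoTuplesIoc.1 hy
            obtain ⟨hlo, hhi⟩ := mem_Ioc.1 (hbounds (Fin.last n))
            rw [filter_Ioc_forall_lt hmono.monotone hlo, sum_snoc_Ioc c hc f _ _ (by omega),
              map_snoc_sub, fixLast_apply, sub_eq_self]
            -- the subtracted vector is the column already in position `n`
            exact f.map_eq_zero_of_eq _ (i := (Fin.last n).castSucc) (j := Fin.last (n + 1))
              (by simp) (Fin.castSucc_lt_last _).ne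
        _ = _ := ih _ (by push_cast at h ⊢; omega)
        _ = _ := by
            rw [fixLast_apply]
            congr 1
            ext j : 1
            cases j using Fin.lastCases <;> simp

end AlternatingMap

lemma initialConfigs_eq_strictMonoTuplesIoc (N L : ℕ) :
    initialConfigs N L = strictMonoTuplesIoc N (-L) 0 := by
  ext y
  simp [initialConfigs, mem_strictMonoTuplesIoc, StrictMono, Icc_add_one_left_eq_Ioc]

lemma pow_mul_add_one_zpow_sub_succ {K : Type*} [Field K] {w : K} (hw : w + 1 ≠ 0) (k : ℕ)
    (z : ℤ) :
    w ^ (k + 1) * (w + 1) ^ (z - (k + 1 : ℕ)) =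
      w ^ k * (w + 1) ^ (z - k) - w ^ k * (w + 1) ^ (z - 1 - k) := by
  have : (w + 1) ^ (z - k) = (w + 1) ^ (z - 1 - k) * (w + 1) := by
    rw [← zpow_add_one₀ hw]; ring_nf
  rw [this, show z - (k + 1 : ℕ) = z - 1 - k by push_cast; ring]
  ring

theorem sum_over_initial_configs_eq_det_general (N L : ℕ) (hNL : N ≤ L)
    (w : Fin N → ℂ) (hw1 : ∀ i, w i ≠ -1) :
    ∑ y ∈ initialConfigs N L,
        Matrix.det (Matrix.of fun i j : Fin N =>
          w i ^ (((j : ℕ) : ℤ) + 1) * (w i + 1) ^ (y j - (((j : ℕ) : ℤ) + 1)))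
      = Matrix.det (Matrix.of fun i j : Fin N =>
          w i ^ ((j : ℕ) : ℤ) * (w i + 1) ^ (-(N : ℤ) + 1)
            - (if (j : ℕ) = 0 then (w i + 1) ^ (-(L : ℤ)) else 0)) := by
  set c : ℕ → ℤ → Fin N → ℂ := fun k z i => w i ^ k * (w i + 1) ^ (z - k)
  have hc : ∀ k z, c (k + 1) z = c k z - c k (z - 1) := fun k z =>
    funext fun i => pow_mul_add_one_zpow_sub_succ (add_eq_zero_iff_eq_neg.not.2 (hw1 i)) k z
  have key := (Matrix.detRowAlternating).sum_strictMonoTuplesIoc_eq c hc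
    (lo := -L) (hi := 0) (by omega)
  rw [initialConfigs_eq_strictMonoTuplesIoc]
  convert key using 1
  -- entrywise, `zpow` at a natural exponent is definitionally `pow`
  · exact sum_congr rfl fun y _ => (Matrix.det_transpose _).symm
  · rw [← Matrix.det_transpose]
    congr 1
    ext i j
    simp [c, ite_apply, neg_add_eq_sub]

theorem sum_over_initial_configs_eq_det (N L : ℕ) (hN : 1 ≤ N) (hNL : N ≤ L)
    (w : Fin N → ℂ) (hw0 : ∀ i, w i ≠ 0) (hw1 : ∀ i, w i ≠ -1) :
    ∑ y ∈ initialConfigs N L,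
        Matrix.det (Matrix.of fun i j : Fin N =>
          w i ^ (((j : ℕ) : ℤ) + 1) * (w i + 1) ^ (y j - (((j : ℕ) : ℤ) + 1)))
      = Matrix.det (Matrix.of fun i j : Fin N =>
          w i ^ ((j : ℕ) : ℤ) * (w i + 1) ^ (-(N : ℤ) + 1)
            - (if (j : ℕ) = 0 then (w i + 1) ^ (-(L : ℤ)) else 0)) :=
  sum_over_initial_configs_eq_det_general N L hNL w hw1
end

section
/- Let 1 ≤ N < L be integers and set ρ = N/L and r₀ = ρ^ρ (1−ρ)^{1−ρ}. For every complex number w with Re w = −ρ one has |w^N (w+1)^{L−N}| ≥ r₀^L. Consequently, for every complex 𝐳 with |𝐳| < r₀, the polynomial q_𝐳(w) = w^N (w+1)^{L−N} − 𝐳^L has no root on the vertical line Re w = −ρ. -/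
/-! On the line `Re w = -ρ` one has `|w| ≥ ρ` and `|w + 1| ≥ 1 - ρ`, so
`|w ^ N (w + 1) ^ (L - N)| ≥ ρ ^ N (1 - ρ) ^ (L - N)`, and this product is exactly `r₀ ^ L`
because `ρ L = N` and `(1 - ρ) L = L - N`. A root of `q_𝐳` there would force `|𝐳| ^ L ≥ r₀ ^ L`. -/

lemma Real.rpow_pow_eq_pow_of_mul_eq {x y : ℝ} {L N : ℕ} (hx : 0 ≤ x) (h : y * L = N) :
    (x ^ y) ^ L = x ^ N := by
  rw [← Real.rpow_natCast, ← Real.rpow_mul hx, h, Real.rpow_natCast]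

lemma Complex.abs_re_pow_mul_abs_re_add_one_pow_le_norm (w : ℂ) (m n : ℕ) :
    |w.re| ^ m * |w.re + 1| ^ n ≤ ‖w ^ m * (w + 1) ^ n‖ := by
  have hw1 : |w.re + 1| ≤ ‖w + 1‖ := by
    simpa only [Complex.add_re, Complex.one_re] using Complex.abs_re_le_norm (w + 1)
  rw [norm_mul, norm_pow, norm_pow]
  gcongr
  exact Complex.abs_re_le_norm w

theorem no_root_on_critical_line_general (N L : ℕ) (hNL : N < L)
    (ρ r₀ : ℝ) (hρ : ρ = (N : ℝ) / L)
    (hr₀ : r₀ = ρ ^ ρ * (1 - ρ) ^ (1 - ρ)) :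
    (∀ w : ℂ, w.re = -ρ → r₀ ^ L ≤ ‖w ^ N * (w + 1) ^ (L - N)‖) ∧
    ∀ zz : ℂ, ‖zz‖ < r₀ →
      ∀ w : ℂ, w.re = -ρ → w ^ N * (w + 1) ^ (L - N) - zz ^ L ≠ 0 := by
  have hL : (0 : ℝ) < L := by exact_mod_cast (N.zero_le.trans_lt hNL)
  have hρ0 : 0 ≤ ρ := hρ ▸ by positivity
  have hρ1 : ρ < 1 := by rw [hρ, div_lt_one hL]; exact_mod_cast hNL
  have hr₀L : r₀ ^ L = ρ ^ N * (1 - ρ) ^ (L - N) := by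
    rw [hr₀, mul_pow, Real.rpow_pow_eq_pow_of_mul_eq hρ0 (by rw [hρ]; field_simp),
      Real.rpow_pow_eq_pow_of_mul_eq (sub_nonneg.2 hρ1.le)
        (by rw [Nat.cast_sub hNL.le, hρ]; field_simp)]
  have lower : ∀ w : ℂ, w.re = -ρ → r₀ ^ L ≤ ‖w ^ N * (w + 1) ^ (L - N)‖ := by
    intro w hw
    have h := w.abs_re_pow_mul_abs_re_add_one_pow_le_norm N (L - N)
    rwa [hw, abs_neg, abs_of_nonneg hρ0, neg_add_eq_sub, abs_of_pos (sub_pos.2 hρ1),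
      ← hr₀L] at h
  refine ⟨lower, fun zz hz w hw hroot => ?_⟩
  have hzL : ‖zz ^ L‖ < r₀ ^ L := by
    rw [norm_pow]
    exact pow_lt_pow_left₀ hz (norm_nonneg zz) (N.zero_le.trans_lt hNL).ne'
  have h := lower w hw
  rw [sub_eq_zero.mp hroot] at h
  exact h.not_gt hzL

theorem no_root_on_critical_line (N L : ℕ) (hN : 1 ≤ N) (hNL : N < L)
    (ρ r₀ : ℝ) (hρ : ρ = (N : ℝ) / L)
    (hr₀ : r₀ = ρ ^ ρ * (1 - ρ) ^ (1 - ρ)) :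
    (∀ w : ℂ, w.re = -ρ → r₀ ^ L ≤ ‖w ^ N * (w + 1) ^ (L - N)‖) ∧
    ∀ zz : ℂ, ‖zz‖ < r₀ →
      ∀ w : ℂ, w.re = -ρ → w ^ N * (w + 1) ^ (L - N) - zz ^ L ≠ 0 :=
  no_root_on_critical_line_general N L hNL ρ r₀ hρ hr₀
end

section
/- Let 1 ≤ N < L be integers, set ρ = N/L and r₀ = ρ^ρ (1−ρ)^{1−ρ}, and let 𝐳 be a complex number with 0 < |𝐳| < r₀. Then the polynomial q_𝐳(w) = w^N (w+1)^{L−N} − 𝐳^L has L distinct roots; that is, every root of q_𝐳 is simple. -/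
/-!
A multiple root `a` of `q_z = f - z ^ L`, where `f = w ^ N * (w + 1) ^ (L - N)`, is a
critical point of `f`. Since `w (w + 1) f' = (L w + N) f` and `f a = z ^ L ≠ 0`, the only
candidate is `a = -ρ`, where `|f(-ρ)| = ρ ^ N (1 - ρ) ^ (L - N) = r₀ ^ L`. Hence `|z| = r₀`,
contradicting `|z| < r₀`.
-/

open Polynomial

namespace Polynomial

theorem nodup_roots_of_forall_isRoot_not_isRoot_derivative {R : Type*} [CommRing R] [IsDomain R]
    {p : R[X]} (h : ∀ a, p.IsRoot a → ¬ (derivative p).IsRoot a) : p.roots.Nodup := by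
  classical
  rcases eq_or_ne p 0 with rfl | hp
  · simp
  refine Multiset.nodup_iff_count_le_one.mpr fun a => ?_
  rw [count_roots]
  by_contra! hlt
  obtain ⟨h0, h1⟩ := (one_lt_rootMultiplicity_iff_isRoot hp).mp hlt
  exact h a h0 h1

theorem isMonicOfDegree_X_pow_mul_X_add_one_pow_sub_C {R : Type*} [CommRing R] [Nontrivial R]
    {N M : ℕ} (hNM : N + M ≠ 0) (c : R) :
    IsMonicOfDegree (X ^ N * (X + 1) ^ M - C c) (N + M) := by
  refine ((isMonicOfDegree_X_pow R N).mul ?_).sub (by simpa using Nat.pos_of_ne_zero hNM)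
  simpa using (isMonicOfDegree_X_add_one (1 : R)).pow M

theorem X_mul_X_add_one_mul_derivative_X_pow_mul_X_add_one_pow {R : Type*} [CommRing R]
    (N M : ℕ) :
    X * (X + 1) * derivative (X ^ N * (X + 1) ^ M : R[X]) =
      (((N : R[X]) + (M : R[X])) * X + (N : R[X])) * (X ^ N * (X + 1) ^ M) := by
  rcases N with _ | N <;> rcases M with _ | M <;>
    simp only [derivative_mul, derivative_pow, derivative_add, derivative_X, derivative_one,
      C_eq_natCast] <;> push_cast <;> ring

theorem eq_neg_div_of_isRoot_of_isRoot_derivative {K : Type*} [Field K] {N M : ℕ} {c a : K}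
    (hc : c ≠ 0) (hNM : (N : K) + M ≠ 0) (h0 : (X ^ N * (X + 1) ^ M - C c).IsRoot a)
    (h1 : (derivative (X ^ N * (X + 1) ^ M - C c)).IsRoot a) : a = -(N / (N + M)) := by
  have key := congr_arg (eval a)
    (X_mul_X_add_one_mul_derivative_X_pow_mul_X_add_one_pow (R := K) N M)
  rw [derivative_sub, derivative_C, sub_zero] at h1
  rw [IsRoot, eval_sub, eval_C, sub_eq_zero] at h0
  simp only [eval_mul, h1.eq_zero, mul_zero, eval_add, eval_natCast, eval_X, h0] at key
  have hcrit : (N + M) * a + N = (0 : K) := (mul_eq_zero.mp key.symm).resolve_right hc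
  field_simp
  linear_combination hcrit

end Polynomial

theorem norm_neg_pow_mul_neg_add_one_pow {ρ : ℝ} (h0 : 0 ≤ ρ) (h1 : ρ ≤ 1) (N M : ℕ) :
    ‖(-(ρ : ℂ)) ^ N * (-(ρ : ℂ) + 1) ^ M‖ = ρ ^ N * (1 - ρ) ^ M := by
  rw [neg_add_eq_sub, ← Complex.ofReal_one, ← Complex.ofReal_sub, norm_mul, norm_pow, norm_pow,
    norm_neg, Complex.norm_real, Complex.norm_real, Real.norm_of_nonneg h0,
    Real.norm_of_nonneg (sub_nonneg.mpr h1)]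

theorem rpow_self_mul_one_sub_rpow_pow {N L : ℕ} (hNL : N ≤ L) (hL : L ≠ 0) :
    (((N / L : ℝ) ^ (N / L : ℝ)) * (1 - N / L : ℝ) ^ (1 - N / L : ℝ)) ^ L =
      (N / L : ℝ) ^ N * (1 - N / L : ℝ) ^ (L - N) := by
  have hL' : (0 : ℝ) < L := by positivity
  have hρ1 : (N / L : ℝ) ≤ 1 := div_le_one_of_le₀ (by exact_mod_cast hNL) hL'.le
  have hN : (N / L : ℝ) * L = N := by field_simp
  have hM : (1 - N / L : ℝ) * L = (L - N : ℕ) := by push_cast [hNL]; field_simp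
  rw [mul_pow, ← Real.rpow_natCast, ← Real.rpow_natCast (_ ^ _),
    ← Real.rpow_mul (by positivity), ← Real.rpow_mul (sub_nonneg.mpr hρ1), hN, hM,
    Real.rpow_natCast, Real.rpow_natCast]

open Polynomial in
theorem roots_are_simple_general (N L : ℕ) (hNL : N < L)
    (ρ r₀ : ℝ) (hρ : ρ = (N : ℝ) / L)
    (hr₀ : r₀ = ρ ^ ρ * (1 - ρ) ^ (1 - ρ))
    (zz : ℂ) (hzz0 : 0 < ‖zz‖) (hzzr : ‖zz‖ < r₀) :
    Multiset.card (X ^ N * (X + 1) ^ (L - N) - C (zz ^ L) : ℂ[X]).roots = L ∧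
    (X ^ N * (X + 1) ^ (L - N) - C (zz ^ L) : ℂ[X]).roots.Nodup := by
  have hL : L ≠ 0 := by omega
  have hr₀L : r₀ ^ L = ρ ^ N * (1 - ρ) ^ (L - N) := by
    rw [hr₀, hρ, rpow_self_mul_one_sub_rpow_pow hNL.le hL]
  obtain ⟨M, rfl⟩ := Nat.exists_eq_add_of_le hNL.le
  rw [Nat.add_sub_cancel_left] at hr₀L ⊢
  refine ⟨by rw [IsAlgClosed.card_roots_eq_natDegree,
    (isMonicOfDegree_X_pow_mul_X_add_one_pow_sub_C hL _).natDegree_eq], ?_⟩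
  refine nodup_roots_of_forall_isRoot_not_isRoot_derivative fun a h0 h1 => ?_
  have ha : a = -(ρ : ℂ) := by
    rw [eq_neg_div_of_isRoot_of_isRoot_derivative (pow_ne_zero _ (norm_pos_iff.mp hzz0))
      (by exact_mod_cast hL) h0 h1, hρ]
    push_cast
    ring
  have hρ0 : 0 ≤ ρ := hρ ▸ by positivity
  have hρ1 : ρ ≤ 1 := hρ ▸ div_le_one_of_le₀ (by exact_mod_cast hNL.le) (by positivity)
  have hval : zz ^ (N + M) = (-(ρ : ℂ)) ^ N * (-(ρ : ℂ) + 1) ^ M := by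
    rw [IsRoot, eval_sub, eval_C, sub_eq_zero] at h0
    simpa [ha] using h0.symm
  have hnorm : ‖zz‖ ^ (N + M) = r₀ ^ (N + M) := by
    rw [← norm_pow, hval, norm_neg_pow_mul_neg_add_one_pow hρ0 hρ1, hr₀L]
  exact (pow_lt_pow_left₀ hzzr (norm_nonneg _) hL).ne hnorm

open Polynomial in
theorem roots_are_simple (N L : ℕ) (hN : 1 ≤ N) (hNL : N < L)
    (ρ r₀ : ℝ) (hρ : ρ = (N : ℝ) / L)
    (hr₀ : r₀ = ρ ^ ρ * (1 - ρ) ^ (1 - ρ))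
    (zz : ℂ) (hzz0 : 0 < ‖zz‖) (hzzr : ‖zz‖ < r₀) :
    Multiset.card (X ^ N * (X + 1) ^ (L - N) - C (zz ^ L) : ℂ[X]).roots = L ∧
    (X ^ N * (X + 1) ^ (L - N) - C (zz ^ L) : ℂ[X]).roots.Nodup :=
  roots_are_simple_general N L hNL ρ r₀ hρ hr₀ zz hzz0 hzzr
end

section
/- Let s > 0 be a real number and let z be a complex number with |z| < 1. Then the integral ∫_0^∞ x^{s−1}/(e^x − z) dx converges, and (z/Γ(s)) · ∫_0^∞ x^{s−1}/(e^x − z) dx = ∑_{k=1}^∞ z^k/k^s = Li_s(z); i.e., the integral representation of the polylogarithm agrees with its power series on the unit disk. -/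
/-!
For `t > 0`, `z / (e^t - z) = ∑_{k ≥ 1} z^k e^{-kt}` is a geometric series in `z e^{-t}`. The
Mellin transform of `e^{-kt}` at `s` is `Γ(s) / k^s`, and the Mellin transform may be taken
termwise because `∑ ‖z‖^k / k^s` converges. Integrability of
`x^{s-1} / (e^x - z)` comes from `‖e^x - z‖ ≥ (1 - ‖z‖) e^x`, which dominates it by a multiple of
the Gamma integrand.
-/

open MeasureTheory Set

lemma one_sub_norm_mul_exp_le_norm_exp_sub (z : ℂ) {x : ℝ} (hx : 0 ≤ x) :
    (1 - ‖z‖) * Real.exp x ≤ ‖(Real.exp x : ℂ) - z‖ := by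
  have h := norm_sub_norm_le (Real.exp x : ℂ) z
  rw [Complex.norm_real, Real.norm_of_nonneg (Real.exp_pos x).le] at h
  nlinarith [norm_nonneg z, Real.one_le_exp hx]

lemma integrableOn_rpow_div_exp_sub {s : ℝ} (hs : 0 < s) {z : ℂ} (hz : ‖z‖ < 1) :
    IntegrableOn (fun x : ℝ => ((x ^ (s - 1) : ℝ) : ℂ) / ((Real.exp x : ℂ) - z)) (Ioi 0) := by
  refine ((Real.GammaIntegral_convergent hs).const_mul (1 - ‖z‖)⁻¹).mono'
    (Measurable.aestronglyMeasurable (by fun_prop)) ?_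
  filter_upwards [ae_restrict_mem measurableSet_Ioi] with x (hx : 0 < x)
  have hden := one_sub_norm_mul_exp_le_norm_exp_sub z hx.le
  have hr : 0 < 1 - ‖z‖ := by linarith
  have hpos : 0 < ‖(Real.exp x : ℂ) - z‖ := lt_of_lt_of_le (by positivity) hden
  rw [norm_div, Complex.norm_real, Real.norm_of_nonneg (Real.rpow_nonneg hx.le _),
    div_le_iff₀ hpos, Real.exp_neg]
  calc x ^ (s - 1) = (1 - ‖z‖)⁻¹ * ((Real.exp x)⁻¹ * x ^ (s - 1)) * ((1 - ‖z‖) * Real.exp x) := by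
        field_simp
    _ ≤ _ := by gcongr

lemma hasSum_pow_mul_exp_neg {z : ℂ} (hz : ‖z‖ < 1) {x : ℝ} (hx : 0 ≤ x) :
    HasSum (fun k : ℕ => z ^ (k + 1) * Real.exp (-((k + 1 : ℕ) : ℝ) * x))
      (z / (Real.exp x - z)) := by
  set w := z * Real.exp (-x)
  have hw : ‖w‖ < 1 := by
    rw [norm_mul, Complex.norm_real, Real.norm_of_nonneg (Real.exp_pos _).le]
    nlinarith [Real.exp_le_one_iff.mpr (neg_nonpos.mpr hx), Real.exp_pos (-x), norm_nonneg z]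
  have hterm (k : ℕ) : z ^ (k + 1) * Real.exp (-((k + 1 : ℕ) : ℝ) * x) = w * w ^ k := by
    rw [← pow_succ', mul_pow, neg_mul, ← mul_neg, Real.exp_nat_mul]
    push_cast
    ring
  have hexp : (Real.exp x : ℂ) * Real.exp (-x) = 1 := by
    rw [← Complex.ofReal_mul, ← Real.exp_add, add_neg_cancel, Real.exp_zero, Complex.ofReal_one]
  have hsub : (Real.exp x : ℂ) - z ≠ 0 := by
    intro h
    have := one_sub_norm_mul_exp_le_norm_exp_sub z hx
    rw [h, norm_zero] at this
    nlinarith [Real.exp_pos x]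
  have hw1 : 1 - w ≠ 0 := fun h => by
    rw [sub_eq_zero] at h
    rw [← h, norm_one] at hw
    exact lt_irrefl _ hw
  have hsum : z / (Real.exp x - z) = w * (1 - w)⁻¹ := by
    rw [eq_mul_inv_iff_mul_eq₀ hw1, div_mul_eq_mul_div, div_eq_iff hsub]
    linear_combination -z * hexp
  simp_rw [hterm, hsum]
  exact (hasSum_geometric_of_norm_lt_one hw).mul_left w

lemma hasSum_mellin_div_exp_sub {s : ℂ} (hs : 0 < s.re) {z : ℂ} (hz : ‖z‖ < 1) :
    HasSum (fun k : ℕ => Complex.Gamma s * z ^ (k + 1) / ((k + 1 : ℕ) : ℂ) ^ s)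
      (mellin (fun x : ℝ => z / (Real.exp x - z)) s) := by
  have hsum : Summable fun k : ℕ => ‖z ^ (k + 1)‖ / ((k + 1 : ℕ) : ℝ) ^ s.re := by
    refine Summable.of_nonneg_of_le (fun k => by positivity) (fun k => ?_)
      ((summable_geometric_of_lt_one (norm_nonneg z) hz).mul_left ‖z‖)
    rw [norm_pow, ← pow_succ']
    exact div_le_self (by positivity) (Real.one_le_rpow (by simp) hs.le)
  simpa using hasSum_mellin (fun k => Or.inr (by positivity)) hs
    (fun _ hx => hasSum_pow_mul_exp_neg hz (le_of_lt hx)) hsum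

lemma mellin_div_exp_sub_ofReal (s : ℝ) (z : ℂ) :
    mellin (fun x : ℝ => z / (Real.exp x - z)) s
      = z * ∫ x in Ioi (0 : ℝ), ((x ^ (s - 1) : ℝ) : ℂ) / ((Real.exp x : ℂ) - z) := by
  rw [mellin, ← integral_const_mul]
  refine setIntegral_congr_fun measurableSet_Ioi fun x (hx : 0 < x) => ?_
  rw [Complex.ofReal_cpow hx.le, smul_eq_mul, Complex.ofReal_sub, Complex.ofReal_one]
  ring

open MeasureTheory in
theorem polylog_integral_representation (s : ℝ) (hs : 0 < s)
    (z : ℂ) (hz : ‖z‖ < 1) :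
    IntegrableOn
      (fun x : ℝ => ((x ^ (s - 1) : ℝ) : ℂ) / ((Real.exp x : ℂ) - z))
      (Set.Ioi 0) ∧
    z / (Real.Gamma s : ℂ) *
        ∫ x in Set.Ioi (0 : ℝ), ((x ^ (s - 1) : ℝ) : ℂ) / ((Real.exp x : ℂ) - z)
      = ∑' k : ℕ, z ^ (k + 1) / ((((k + 1 : ℕ) : ℝ) ^ s : ℝ) : ℂ) := by
  refine ⟨integrableOn_rpow_div_exp_sub hs hz, ?_⟩
  have hΓ : (Real.Gamma s : ℂ) ≠ 0 := Complex.ofReal_ne_zero.mpr (Real.Gamma_pos_of_pos hs).ne'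
  have hsum := hasSum_mellin_div_exp_sub (s := s) (by simpa using hs) hz
  rw [mellin_div_exp_sub_ofReal, Complex.Gamma_ofReal] at hsum
  rw [div_mul_eq_mul_div, ← (hsum.div_const _).tsum_eq]
  refine tsum_congr fun k => ?_
  rw [Complex.ofReal_cpow (by positivity), Complex.ofReal_natCast]
  field_simp
end

section
/- Let 0 < c₁ < c₂ < 1 and 0 < ε < 1/2 be constants. There exist a constant C > 0 and a positive integer N₀ such that for all integers N, L with N ≥ N₀ and c₁ ≤ N/L ≤ c₂, setting ρ = N/L, and for every purely imaginary complex number ξ with |ξ| ≤ N^{ε/4}, one has | N·Log(1 − √(1−ρ)·ξ·N^{−1/2}) + (L−N)·Log(1 + ρ(1−ρ)^{−1/2}·ξ·N^{−1/2}) + ξ²/2 − ((2ρ−1)/(3√(1−ρ)))·ξ³·N^{−1/2} | ≤ C·N^{ε−1}. -/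
/-!
Write `a = √(1 - ρ)` and `u = ξ N^(-1/2)`, so the two logarithms are `log (1 + z)` at
`z₁ = -a u` and `z₂ = (ρ / a) u`. Replacing each by its cubic Taylor polynomial
`z - z²/2 + z³/3`, the identities `a² = 1 - ρ`, `ρ L = N` and `N u² = ξ²` make the polynomial parts
cancel exactly against `ξ²/2 - (2ρ - 1)/(3a) ξ³ N^(-1/2)`. What is left are the quartic remainders:
both `|zᵢ|` are `O(N^(ε/4 - 1/2))`, so the error is `O(L N^(ε - 2)) = O(N^(ε - 1))` because
`L ≤ N / c₁`.
-/

open Complex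

theorem Complex.norm_log_one_add_sub_cubic_le {z : ℂ} (hz : ‖z‖ ≤ 1 / 2) :
    ‖log (1 + z) - (z - z ^ 2 / 2 + z ^ 3 / 3)‖ ≤ ‖z‖ ^ 4 := by
  have hz₁ : ‖z‖ < 1 := hz.trans_lt (by norm_num)
  have h := norm_log_sub_logTaylor_le 3 hz₁
  have hT : logTaylor 4 z = z - z ^ 2 / 2 + z ^ 3 / 3 := by
    simp only [logTaylor_succ, logTaylor_zero, Pi.add_apply, Nat.cast_ofNat, Nat.cast_one,
      Nat.reduceAdd, pow_one, pow_zero, mul_one, zero_add, div_one, even_two, Even.neg_pow, one_pow,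
      one_mul, CharP.cast_eq_zero, div_zero, add_zero]
    ring
  rw [hT] at h
  have hinv : (1 - ‖z‖)⁻¹ ≤ 2 := by
    rw [inv_le_comm₀ (by linarith) (by norm_num)]
    linarith
  calc _ ≤ ‖z‖ ^ (3 + 1) * (1 - ‖z‖)⁻¹ / (3 + 1) := h
    _ ≤ ‖z‖ ^ 4 * 2 / 4 := by gcongr; norm_num
    _ ≤ ‖z‖ ^ 4 := by linarith [pow_nonneg (norm_nonneg z) 4]

theorem norm_weighted_log_remainder_le {N L r : ℝ} {z₁ z₂ : ℂ} (hN : 0 ≤ N) (hNL : N ≤ L)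
    (h₁ : ‖z₁‖ ≤ r) (h₂ : ‖z₂‖ ≤ r) (hr : r ≤ 1 / 2) :
    ‖(N : ℂ) * (log (1 + z₁) - (z₁ - z₁ ^ 2 / 2 + z₁ ^ 3 / 3))
        + ((L : ℂ) - N) * (log (1 + z₂) - (z₂ - z₂ ^ 2 / 2 + z₂ ^ 3 / 3))‖ ≤ L * r ^ 4 := by
  have hR₁ := (norm_log_one_add_sub_cubic_le (h₁.trans hr)).trans
    (pow_le_pow_left₀ (norm_nonneg _) h₁ 4)
  have hR₂ := (norm_log_one_add_sub_cubic_le (h₂.trans hr)).trans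
    (pow_le_pow_left₀ (norm_nonneg _) h₂ 4)
  have hLN : ‖(L : ℂ) - N‖ = L - N := by
    rw [← ofReal_sub, norm_real, Real.norm_of_nonneg (by linarith)]
  calc _ ≤ ‖(N : ℂ)‖ * ‖log (1 + z₁) - (z₁ - z₁ ^ 2 / 2 + z₁ ^ 3 / 3)‖
        + ‖(L : ℂ) - N‖ * ‖log (1 + z₂) - (z₂ - z₂ ^ 2 / 2 + z₂ ^ 3 / 3)‖ := by
        rw [← norm_mul, ← norm_mul]
        exact norm_add_le _ _
    _ ≤ N * r ^ 4 + (L - N) * r ^ 4 := by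
        rw [norm_real, Real.norm_of_nonneg hN, hLN]
        gcongr
    _ = L * r ^ 4 := by ring

theorem cubic_taylor_cancel {K : Type*} [Field K] [CharZero K] {a ρ N L t : K} (ξ : K)
    (ha : a ≠ 0) (ha₂ : a ^ 2 = 1 - ρ) (hρL : ρ * L = N) (ht : N * t ^ 2 = 1) :
    N * (-(a * ξ * t) - (-(a * ξ * t)) ^ 2 / 2 + (-(a * ξ * t)) ^ 3 / 3)
      + (L - N) * (ρ / a * ξ * t - (ρ / a * ξ * t) ^ 2 / 2 + (ρ / a * ξ * t) ^ 3 / 3)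
      + ξ ^ 2 / 2 - (2 * ρ - 1) / (3 * a) * ξ ^ 3 * t = 0 := by
  -- Order by order in `ξ`: `(L - N) ρ / a = N a`, `N a² + (L - N) ρ² / a² = N` and
  -- `(L - N) ρ³ / a³ - N a³ = N (2ρ - 1) / a`.
  field_simp
  linear_combination
    (6 * ξ * t * a ^ 2 - 3 * ξ ^ 2 * a * t ^ 2 * ρ + 2 * ξ ^ 3 * t ^ 3 * ρ ^ 2) * hρL
    + (-6 * ξ * t * a ^ 2 * N + 3 * ξ ^ 2 * a * t ^ 2 * N * (ρ - a ^ 2)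
      + 2 * ξ ^ 3 * t ^ 3 * N * (a ^ 2 * (ρ - a ^ 2) - a ^ 2 - ρ ^ 2)) * ha₂
    + (-3 * ξ ^ 2 * a ^ 3 + 2 * ξ ^ 3 * t * a ^ 2 * (2 * ρ - 1)) * ht

theorem norm_log_expansion_le {ρ N L t q K : ℝ} (ξ : ℂ) (hρ₀ : 0 < ρ) (hρ₁ : ρ < 1)
    (hρL : ρ * L = N) (hN : 0 ≤ N) (ht₀ : 0 ≤ t) (ht : N * t ^ 2 = 1) (hξ : ‖ξ‖ * t ≤ q)
    (hK₁ : 1 ≤ K) (hK : ρ / √(1 - ρ) ≤ K) (hKq : K * q ≤ 1 / 2) :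
    ‖(N : ℂ) * log (1 - (√(1 - ρ) : ℂ) * ξ * t)
        + ((L : ℂ) - N) * log (1 + ((ρ / √(1 - ρ) : ℝ) : ℂ) * ξ * t)
        + ξ ^ 2 / 2 - (((2 * ρ - 1) / (3 * √(1 - ρ)) : ℝ) : ℂ) * ξ ^ 3 * t‖
      ≤ L * (K * q) ^ 4 := by
  set a := √(1 - ρ)
  have ha₀ : 0 < a := Real.sqrt_pos.2 (by linarith)
  have ha₁ : a ≤ 1 := Real.sqrt_le_one.2 (by linarith)
  have hNL : N ≤ L := by nlinarith
  have hcancel := cubic_taylor_cancel (a := (a : ℂ)) (ρ := ρ) (N := N) (L := L) (t := t) ξ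
    (ofReal_ne_zero.2 ha₀.ne') (by exact_mod_cast Real.sq_sqrt (by linarith))
    (by exact_mod_cast hρL) (by exact_mod_cast ht)
  set z₁ : ℂ := -(a * ξ * t) with hz₁
  set z₂ : ℂ := ρ / a * ξ * t with hz₂
  have hsplit : (N : ℂ) * log (1 - (a : ℂ) * ξ * t)
        + ((L : ℂ) - N) * log (1 + ((ρ / a : ℝ) : ℂ) * ξ * t)
        + ξ ^ 2 / 2 - (((2 * ρ - 1) / (3 * a) : ℝ) : ℂ) * ξ ^ 3 * t
      = (N : ℂ) * (log (1 + z₁) - (z₁ - z₁ ^ 2 / 2 + z₁ ^ 3 / 3))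
        + ((L : ℂ) - N) * (log (1 + z₂) - (z₂ - z₂ ^ 2 / 2 + z₂ ^ 3 / 3)) := by
    push_cast
    rw [← sub_eq_add_neg]
    linear_combination hcancel
  rw [hsplit]
  have hξt : 0 ≤ ‖ξ‖ * t := by positivity
  refine norm_weighted_log_remainder_le hN hNL ?_ ?_ hKq
  · rw [hz₁, norm_neg, norm_mul, norm_mul, norm_real, norm_real, Real.norm_of_nonneg ha₀.le,
      Real.norm_of_nonneg ht₀, mul_assoc]
    exact mul_le_mul (ha₁.trans hK₁) hξ hξt (by linarith)
  · rw [hz₂, ← ofReal_div, norm_mul, norm_mul, norm_real, norm_real,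
      Real.norm_of_nonneg (by positivity), Real.norm_of_nonneg ht₀, mul_assoc]
    exact mul_le_mul hK hξ hξt (by linarith)

theorem div_sqrt_one_sub_le_div_sqrt_one_sub {x y : ℝ} (hx : 0 ≤ x) (hxy : x ≤ y)
    (hy : y < 1) :
    x / √(1 - x) ≤ y / √(1 - y) :=
  div_le_div₀ (hx.trans hxy) hxy (Real.sqrt_pos.2 (by linarith))
    (Real.sqrt_le_sqrt (by linarith))

theorem Real.mul_rpow_neg_half_sq {x : ℝ} (hx : 0 < x) : x * (x ^ (-(1 / 2) : ℝ)) ^ 2 = 1 := by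
  rw [← Real.rpow_mul_natCast hx.le]
  nth_rewrite 1 [← Real.rpow_one x]
  rw [← Real.rpow_add hx]
  norm_num

theorem Real.mul_rpow_pow_four {x : ℝ} (hx : 0 < x) (ε : ℝ) :
    x * (x ^ (ε / 4 + -(1 / 2))) ^ 4 = x ^ (ε - 1) := by
  rw [← Real.rpow_mul_natCast hx.le]
  nth_rewrite 1 [← Real.rpow_one x]
  rw [← Real.rpow_add hx]
  ring_nf

theorem Real.mul_rpow_le_half {x K s : ℝ} (hK : 0 < K) (hx₁ : 1 ≤ x) (hx : (2 * K) ^ 4 ≤ x)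
    (hs : s ≤ -(1 / 4)) : K * x ^ s ≤ 1 / 2 := by
  have hx₀ : 0 < x := by linarith
  have hquarter : x ^ (-(1 / 4) : ℝ) ≤ (2 * K)⁻¹ := by
    refine (pow_le_pow_iff_left₀ (by positivity) (by positivity) four_ne_zero).1 ?_
    rw [← Real.rpow_mul_natCast hx₀.le, inv_pow, show (-(1 / 4) : ℝ) * (4 : ℕ) = -1 by norm_num,
      Real.rpow_neg_one]
    exact inv_anti₀ (by positivity) hx
  calc K * x ^ s ≤ K * (2 * K)⁻¹ := by
        gcongr
        exact (Real.rpow_le_rpow_of_exponent_le hx₁ hs).trans hquarter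
    _ = 1 / 2 := by field_simp

theorem log_expansion_on_critical_line_general (c₁ c₂ ε : ℝ)
    (hc₁ : 0 < c₁) (hc₂ : c₂ < 1)
    (hε : ε < 1 / 2) :
    ∃ C > (0 : ℝ), ∃ N₀ : ℕ, 0 < N₀ ∧
      ∀ N L : ℕ, N₀ ≤ N →
        c₁ ≤ (N : ℝ) / L → (N : ℝ) / L ≤ c₂ →
        ∀ ξ : ℂ, ξ.re = 0 → ‖ξ‖ ≤ (N : ℝ) ^ (ε / 4) →
          ‖((N : ℂ) * Complex.log
                (1 - (Real.sqrt (1 - (N : ℝ) / L) : ℂ) * ξ *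
                  (((N : ℝ) ^ (-(1 / 2) : ℝ) : ℝ) : ℂ))
              + ((L : ℂ) - (N : ℂ)) * Complex.log
                (1 + ((((N : ℝ) / L) / Real.sqrt (1 - (N : ℝ) / L) : ℝ) : ℂ) * ξ *
                  (((N : ℝ) ^ (-(1 / 2) : ℝ) : ℝ) : ℂ))
              + ξ ^ 2 / 2
              - (((2 * ((N : ℝ) / L) - 1) / (3 * Real.sqrt (1 - (N : ℝ) / L)) : ℝ) : ℂ) *
                  ξ ^ 3 * (((N : ℝ) ^ (-(1 / 2) : ℝ) : ℝ) : ℂ))‖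
            ≤ C * (N : ℝ) ^ (ε - 1) := by
  set K := max 1 (c₂ / √(1 - c₂))
  have hK₁ : 1 ≤ K := le_max_left _ _
  refine ⟨K ^ 4 / c₁, by positivity, ⌈(2 * K) ^ 4⌉₊ + 1, Nat.succ_pos _, ?_⟩
  intro N L hN hρ₁ hρ₂ ξ _ hξ
  have hNK : (2 * K) ^ 4 ≤ (N : ℝ) :=
    (Nat.le_ceil _).trans (by exact_mod_cast (Nat.le_succ _).trans hN)
  have hN₁ : 1 ≤ (N : ℝ) := (one_le_pow₀ (by linarith)).trans hNK
  have hN₀ : 0 < (N : ℝ) := by linarith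
  have hL : 0 < (L : ℝ) := L.cast_nonneg.lt_of_ne fun hL ↦ by
    rw [← hL, div_zero] at hρ₁
    linarith
  have hρ₀ : 0 < (N : ℝ) / L := hc₁.trans_le hρ₁
  have hξq : ‖ξ‖ * (N : ℝ) ^ (-(1 / 2) : ℝ) ≤ (N : ℝ) ^ (ε / 4 + -(1 / 2)) := by
    rw [Real.rpow_add hN₀]
    gcongr
  have h := norm_log_expansion_le ξ hρ₀ (hρ₂.trans_lt hc₂) (div_mul_cancel₀ _ hL.ne')
    hN₀.le (by positivity) (Real.mul_rpow_neg_half_sq hN₀) hξq hK₁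
    ((div_sqrt_one_sub_le_div_sqrt_one_sub hρ₀.le hρ₂ hc₂).trans (le_max_right _ _))
    (Real.mul_rpow_le_half (by linarith) hN₁ hNK (by linarith))
  rw [ofReal_natCast, ofReal_natCast] at h
  have hLc : (L : ℝ) ≤ N / c₁ := by
    rw [le_div_iff₀ hc₁]
    rw [le_div_iff₀ hL] at hρ₁
    linarith
  set q := (N : ℝ) ^ (ε / 4 + -(1 / 2))
  calc _ ≤ L * (K * q) ^ 4 := h
    _ ≤ N / c₁ * (K * q) ^ 4 := by gcongr
    _ = K ^ 4 / c₁ * (N * q ^ 4) := by ring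
    _ = K ^ 4 / c₁ * (N : ℝ) ^ (ε - 1) := by rw [Real.mul_rpow_pow_four hN₀]

theorem log_expansion_on_critical_line (c₁ c₂ ε : ℝ)
    (hc₁ : 0 < c₁) (hc₁c₂ : c₁ < c₂) (hc₂ : c₂ < 1)
    (hε0 : 0 < ε) (hε : ε < 1 / 2) :
    ∃ C > (0 : ℝ), ∃ N₀ : ℕ, 0 < N₀ ∧
      ∀ N L : ℕ, N₀ ≤ N →
        c₁ ≤ (N : ℝ) / L → (N : ℝ) / L ≤ c₂ →
        ∀ ξ : ℂ, ξ.re = 0 → ‖ξ‖ ≤ (N : ℝ) ^ (ε / 4) →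
          ‖((N : ℂ) * Complex.log
                (1 - (Real.sqrt (1 - (N : ℝ) / L) : ℂ) * ξ *
                  (((N : ℝ) ^ (-(1 / 2) : ℝ) : ℝ) : ℂ))
              + ((L : ℂ) - (N : ℂ)) * Complex.log
                (1 + ((((N : ℝ) / L) / Real.sqrt (1 - (N : ℝ) / L) : ℝ) : ℂ) * ξ *
                  (((N : ℝ) ^ (-(1 / 2) : ℝ) : ℝ) : ℂ))
              + ξ ^ 2 / 2
              - (((2 * ((N : ℝ) / L) - 1) / (3 * Real.sqrt (1 - (N : ℝ) / L)) : ℝ) : ℂ) *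
                  ξ ^ 3 * (((N : ℝ) ^ (-(1 / 2) : ℝ) : ℝ) : ℂ))‖
            ≤ C * (N : ℝ) ^ (ε - 1) :=
  log_expansion_on_critical_line_general c₁ c₂ ε hc₁ hc₂ hε
end

section
/- Let 0 < c₁ < c₂ < 1, 0 < ε < 1/2 and 0 < δ < 1 be constants. There exist a constant c > 0 and a positive integer N₀ such that for all integers N, L with N ≥ N₀ and c₁ ≤ N/L ≤ c₂ (set ρ = N/L and r₀ = ρ^ρ(1−ρ)^{1−ρ}), all complex numbers z with δ ≤ |z| ≤ 1 − δ, and all complex numbers w with Re w = −ρ and |w + ρ| ≥ ρ√(1−ρ)·N^{ε/4−1/2}, one has |w^N (w+1)^{L−N} − (−1)^N r₀^L z| ≥ r₀^L |z| e^{c N^{ε/2}}. -/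
/-!
Write `ρ = N / L`, `r₀ = ρ ^ ρ (1 - ρ) ^ (1 - ρ)` and `w = -ρ + i t`. Then
`r₀ ^ L = ρ ^ N (1 - ρ) ^ (L - N)`, `|w + 1| ≥ 1 - ρ` and `|w| ^ 2 = ρ ^ 2 (1 + u)` with
`u = (t / ρ) ^ 2`, so `|w ^ N (w + 1) ^ (L - N)| ≥ r₀ ^ L (1 + u) ^ (N / 2)`.
Concavity of `log` gives `log (1 + u) ≥ log 2 · min u 1`, and the hypothesis on `|t|` says
`N u ≥ (1 - ρ) N ^ (ε / 2)`, so the product exceeds `r₀ ^ L exp (κ N ^ (ε / 2))` with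
`κ = log 2 · (1 - c₂) / 2`. Since `|z| < 1`, the subtracted term `r₀ ^ L z` costs only a factor
`exp (κ N ^ (ε / 2) / 2)` once `N` is large.
-/

open Real

theorem log_two_mul_min_le_log_one_add {u : ℝ} (hu : 0 ≤ u) :
    log 2 * min u 1 ≤ log (1 + u) := by
  rcases le_total u 1 with h | h
  · rw [min_eq_left h, mul_comm, ← log_rpow two_pos]
    refine log_le_log (by positivity) ?_
    simpa [one_add_one_eq_two, add_comm] using
      rpow_one_add_le_one_add_mul_self (s := 1) (by norm_num) hu h
  · rw [min_eq_right h, mul_one]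
    exact log_le_log two_pos (by linarith)

theorem exp_mul_log_two_min_le_one_add_pow {u : ℝ} (hu : 0 ≤ u) (n : ℕ) :
    exp (n * (log 2 * min u 1)) ≤ (1 + u) ^ n := by
  calc exp (n * (log 2 * min u 1)) ≤ exp (n * log (1 + u)) := by
        gcongr; exact log_two_mul_min_le_log_one_add hu
    _ = (1 + u) ^ n := by rw [exp_nat_mul, exp_log (by linarith)]

theorem add_one_le_exp_two_mul {y : ℝ} (hy : log 2 ≤ y) : exp y + 1 ≤ exp (2 * y) := by
  have h2 : 2 ≤ exp y := by simpa [exp_log two_pos] using exp_le_exp.mpr hy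
  rw [two_mul, exp_add]
  nlinarith

theorem mul_exp_le_norm_sub {E : Type*} [SeminormedAddCommGroup E] {p q : E} {a y : ℝ}
    (hq : ‖q‖ ≤ a) (hy : log 2 ≤ y) (hp : a * exp (2 * y) ≤ ‖p‖) :
    ‖q‖ * exp y ≤ ‖p - q‖ := by
  have ha : 0 ≤ a := (norm_nonneg q).trans hq
  have hexp := add_one_le_exp_two_mul hy
  calc ‖q‖ * exp y ≤ a * exp (2 * y) - ‖q‖ := by nlinarith [exp_pos y]
    _ ≤ ‖p‖ - ‖q‖ := by linarith
    _ ≤ ‖p - q‖ := norm_sub_norm_le p q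

theorem rpow_self_mul_one_sub_rpow_pow_s15 {ρ : ℝ} (h0 : 0 ≤ ρ) (h1 : ρ ≤ 1) {N L : ℕ}
    (hN : ρ * L = N) : (ρ ^ ρ * (1 - ρ) ^ (1 - ρ)) ^ L = ρ ^ N * (1 - ρ) ^ (L - N) := by
  have hNL : N ≤ L := by exact_mod_cast hN ▸ mul_le_of_le_one_left L.cast_nonneg h1
  have hm : (1 - ρ) * L = ((L - N : ℕ) : ℝ) := by rw [Nat.cast_sub hNL, ← hN]; ring
  rw [mul_pow, ← rpow_natCast (ρ ^ ρ), ← rpow_natCast ((1 - ρ) ^ (1 - ρ)),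
    ← rpow_mul h0, ← rpow_mul (by linarith), hN, hm, rpow_natCast, rpow_natCast]

theorem Complex.norm_add_ofReal_of_re_eq_neg {w : ℂ} {ρ : ℝ} (hw : w.re = -ρ) :
    ‖w + ρ‖ = |w.im| := by
  have : w + ρ = (w.im : ℂ) * I := by apply Complex.ext <;> simp [hw]
  rw [this, norm_mul, norm_I, mul_one, norm_real, Real.norm_eq_abs]

theorem pow_mul_exp_le_norm_pow_of_re_eq_neg {w : ℂ} {ρ : ℝ} (hρ : 0 < ρ) (hw : w.re = -ρ)
    (n : ℕ) :
    ρ ^ n * exp (n * (log 2 * min ((w.im / ρ) ^ 2) 1) / 2) ≤ ‖w‖ ^ n := by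
  have hw2 : ‖w‖ ^ 2 = ρ ^ 2 * (1 + (w.im / ρ) ^ 2) := by
    rw [Complex.sq_norm, Complex.normSq_apply, hw]; field_simp
  refine le_of_pow_le_pow_left₀ two_ne_zero (by positivity) ?_
  rw [mul_pow, ← exp_nat_mul, Nat.cast_ofNat, mul_div_cancel₀ _ two_ne_zero, ← pow_mul,
    ← pow_mul, mul_comm n 2, pow_mul, pow_mul, hw2, mul_pow]
  gcongr
  exact exp_mul_log_two_min_le_one_add_pow (by positivity) n

theorem pow_mul_exp_le_norm_pow_mul_add_one_pow {w : ℂ} {ρ : ℝ} (h0 : 0 < ρ) (h1 : ρ ≤ 1)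
    (hw : w.re = -ρ) (n m : ℕ) :
    ρ ^ n * (1 - ρ) ^ m * exp (n * (log 2 * min ((w.im / ρ) ^ 2) 1) / 2)
      ≤ ‖w ^ n * (w + 1) ^ m‖ := by
  have hw1 := Complex.abs_re_le_norm (w + 1)
  rw [Complex.add_re, hw, Complex.one_re, neg_add_eq_sub, abs_of_nonneg (sub_nonneg.2 h1)] at hw1
  rw [norm_mul, norm_pow, norm_pow, mul_right_comm]
  exact mul_le_mul (pow_mul_exp_le_norm_pow_of_re_eq_neg h0 hw n)
    (pow_le_pow_left₀ (sub_nonneg.2 h1) hw1 m) (by positivity) (by positivity)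

theorem rpow_self_mul_one_sub_rpow_pow_mul_exp_le_norm {w : ℂ} {ρ : ℝ} (h0 : 0 < ρ)
    (h1 : ρ ≤ 1) (hw : w.re = -ρ) {N L : ℕ} (hN : ρ * L = N) :
    (ρ ^ ρ * (1 - ρ) ^ (1 - ρ)) ^ L * exp (N * (log 2 * min ((w.im / ρ) ^ 2) 1) / 2)
      ≤ ‖w ^ N * (w + 1) ^ (L - N)‖ := by
  rw [rpow_self_mul_one_sub_rpow_pow_s15 h0.le h1 hN]
  exact pow_mul_exp_le_norm_pow_mul_add_one_pow h0 h1 hw N (L - N)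

theorem one_sub_mul_rpow_le_mul_sq {ρ t n ε : ℝ} (hρ : 0 < ρ) (hρ1 : ρ ≤ 1) (hn : 0 < n)
    (ht : ρ * √(1 - ρ) * n ^ (ε / 4 - 1 / 2) ≤ |t|) :
    (1 - ρ) * n ^ (ε / 2) ≤ n * (t / ρ) ^ 2 := by
  have hsq := pow_le_pow_left₀ (by positivity) ht 2
  rw [sq_abs, mul_pow, mul_pow, sq_sqrt (by linarith)] at hsq
  have hn' : (n ^ (ε / 4 - 1 / 2)) ^ 2 * n = n ^ (ε / 2) := by
    rw [← rpow_mul_natCast hn.le, ← rpow_add_one hn.ne']; ring_nf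
  rw [← hn', div_pow, mul_div_assoc', le_div_iff₀ (by positivity)]
  nlinarith

theorem one_sub_mul_rpow_le_mul_min_sq {ρ c t n ε : ℝ} (hρ : 0 < ρ) (hρc : ρ ≤ c)
    (hc : c ≤ 1) (hn : 1 ≤ n) (hε : ε ≤ 2) (ht : ρ * √(1 - ρ) * n ^ (ε / 4 - 1 / 2) ≤ |t|) :
    (1 - c) * n ^ (ε / 2) ≤ n * min ((t / ρ) ^ 2) 1 := by
  have hsq := one_sub_mul_rpow_le_mul_sq hρ (hρc.trans hc) (by linarith) ht
  have hle : n ^ (ε / 2) ≤ n :=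
    (rpow_le_rpow_of_exponent_le hn (by linarith)).trans_eq (rpow_one n)
  have hpos : 0 ≤ n ^ (ε / 2) := by positivity
  rw [mul_min_of_nonneg _ _ (by linarith), mul_one]
  exact le_min (by nlinarith) (by nlinarith)

theorem lower_bound_away_from_saddle_general (c₁ c₂ ε δ : ℝ)
    (hc₁ : 0 < c₁) (hc₂ : c₂ < 1)
    (hε0 : 0 < ε) (hε : ε < 1 / 2) (hδ0 : 0 < δ) :
    ∃ c > (0 : ℝ), ∃ N₀ : ℕ, 0 < N₀ ∧
      ∀ N L : ℕ, N₀ ≤ N →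
        c₁ ≤ (N : ℝ) / L → (N : ℝ) / L ≤ c₂ →
        ∀ z : ℂ, δ ≤ ‖z‖ → ‖z‖ ≤ 1 - δ →
          ∀ w : ℂ, w.re = -((N : ℝ) / L) →
            ((N : ℝ) / L) * Real.sqrt (1 - (N : ℝ) / L) * (N : ℝ) ^ (ε / 4 - 1 / 2)
                ≤ ‖w + (((N : ℝ) / L : ℝ) : ℂ)‖ →
            (((N : ℝ) / L) ^ ((N : ℝ) / L) * (1 - (N : ℝ) / L) ^ (1 - (N : ℝ) / L)) ^ L *
                ‖z‖ * Real.exp (c * (N : ℝ) ^ (ε / 2))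
              ≤ ‖
                  (w ^ N * (w + 1) ^ (L - N)
                    - (-1 : ℂ) ^ N *
                      (((((N : ℝ) / L) ^ ((N : ℝ) / L) *
                        (1 - (N : ℝ) / L) ^ (1 - (N : ℝ) / L)) ^ L : ℝ) : ℂ) * z)‖ := by
  have hc₂' : 0 < 1 - c₂ := by linarith
  set κ := log 2 * (1 - c₂) / 2 with hκ_def
  have hκ : 0 < κ := by have := log_pos one_lt_two; positivity
  refine ⟨κ / 2, by positivity, ⌈(4 / (1 - c₂)) ^ (ε / 2)⁻¹⌉₊ + 1, Nat.succ_pos _, ?_⟩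
  intro N L hN₀ h₁ h₂ z _ hz w hw hwρ
  set ρ : ℝ := N / L
  have hN : (1 : ℝ) ≤ N := by exact_mod_cast (Nat.succ_pos _).trans_le hN₀
  have hρ0 : 0 < ρ := hc₁.trans_le h₁
  have hρ1 : ρ < 1 := h₂.trans_lt hc₂
  have hρL : ρ * L = N := div_mul_cancel₀ _ (by rintro h; simp [ρ, h] at hρ0)
  have hmin := one_sub_mul_rpow_le_mul_min_sq (ε := ε) hρ0 h₂ hc₂.le hN (by linarith)
    (by rwa [Complex.norm_add_ofReal_of_re_eq_neg hw] at hwρ)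
  set x : ℝ := (N : ℝ) ^ (ε / 2)
  have hx : 4 / (1 - c₂) ≤ x := (rpow_inv_le_iff_of_pos (by positivity) (by linarith)
    (by positivity)).1 ((Nat.le_ceil _).trans (by exact_mod_cast (Nat.le_succ _).trans hN₀))
  have hP : (ρ ^ ρ * (1 - ρ) ^ (1 - ρ)) ^ L * exp (2 * (κ / 2 * x))
      ≤ ‖w ^ N * (w + 1) ^ (L - N)‖ := by
    refine le_trans ?_ (rpow_self_mul_one_sub_rpow_pow_mul_exp_le_norm hρ0 hρ1.le hw hρL)
    gcongr
    rw [hκ_def]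
    linear_combination mul_le_mul_of_nonneg_left hmin (log_pos one_lt_two).le / 2
  have hlog : log 2 ≤ κ / 2 * x :=
    calc log 2 = κ / 2 * (4 / (1 - c₂)) := by field_simp; ring
      _ ≤ κ / 2 * x := by gcongr
  have hq : ‖(-1 : ℂ) ^ N * (((ρ ^ ρ * (1 - ρ) ^ (1 - ρ)) ^ L : ℝ) : ℂ) * z‖
      = (ρ ^ ρ * (1 - ρ) ^ (1 - ρ)) ^ L * ‖z‖ := by
    rw [norm_mul, norm_mul, norm_pow, norm_neg, norm_one, one_pow, one_mul, Complex.norm_real,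
      norm_of_nonneg (by positivity)]
  rw [← hq]
  exact mul_exp_le_norm_sub (hq ▸ mul_le_of_le_one_right (by positivity) (by linarith))
    hlog hP

theorem lower_bound_away_from_saddle (c₁ c₂ ε δ : ℝ)
    (hc₁ : 0 < c₁) (hc₁c₂ : c₁ < c₂) (hc₂ : c₂ < 1)
    (hε0 : 0 < ε) (hε : ε < 1 / 2) (hδ0 : 0 < δ) (hδ1 : δ < 1) :
    ∃ c > (0 : ℝ), ∃ N₀ : ℕ, 0 < N₀ ∧
      ∀ N L : ℕ, N₀ ≤ N →
        c₁ ≤ (N : ℝ) / L → (N : ℝ) / L ≤ c₂ →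
        ∀ z : ℂ, δ ≤ ‖z‖ → ‖z‖ ≤ 1 - δ →
          ∀ w : ℂ, w.re = -((N : ℝ) / L) →
            ((N : ℝ) / L) * Real.sqrt (1 - (N : ℝ) / L) * (N : ℝ) ^ (ε / 4 - 1 / 2)
                ≤ ‖w + (((N : ℝ) / L : ℝ) : ℂ)‖ →
            (((N : ℝ) / L) ^ ((N : ℝ) / L) * (1 - (N : ℝ) / L) ^ (1 - (N : ℝ) / L)) ^ L *
                ‖z‖ * Real.exp (c * (N : ℝ) ^ (ε / 2))
              ≤ ‖
                  (w ^ N * (w + 1) ^ (L - N)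
                    - (-1 : ℂ) ^ N *
                      (((((N : ℝ) / L) ^ ((N : ℝ) / L) *
                        (1 - (N : ℝ) / L) ^ (1 - (N : ℝ) / L)) ^ L : ℝ) : ℂ) * z)‖ :=
  lower_bound_away_from_saddle_general c₁ c₂ ε δ hc₁ hc₂ hε0 hε hδ0
end
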